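/- Monotonicity of optimality of standard querying in the partial-information model: for (p,κ), (p',κ') ∈ (1/2,1) × [0,1] with p ≥ p' and κ' ≥ κ, if a_{p,κ}(f,π_{1/2}) = a(f,π_{1/2}) for a Boolean function f, then also a_{p',κ'}(f,π_{1/2}) = a(f,π_{1/2}). -/

import Mathlib

open Classical

noncomputable section

/-- Flip the bits of `x` in the set `B`. -/
def flipOn {ι : Type*} [DecidableEq ι] (x : ι → Bool) (B : Finset ι) : ι → Bool :=
  fun i => if i ∈ B then !(x i) else x i

/-- Pointwise sensitivity of `f` at `x`. -/
def sensAt {ι : Type*} [Fintype ι] [DecidableEq ι] (f : (ι → Bool) → Bool)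
    (x : ι → Bool) : ℕ :=
  (Finset.univ.filter fun i => f (flipOn x {i}) ≠ f x).card

/-- Pointwise block sensitivity of `f` at `x`. -/
def bsAt {ι : Type*} [DecidableEq ι] (f : (ι → Bool) → Bool) (x : ι → Bool) : ℕ :=
  sSup {m | ∃ B : Fin m → Finset ι,
    (∀ j, f (flipOn x (B j)) ≠ f x) ∧ ∀ j k, j ≠ k → Disjoint (B j) (B k)}

/-- `W` is a witness set for `f` at `x`. -/
def IsWitness {ι : Type*} (f : (ι → Bool) → Bool) (x : ι → Bool) (W : Finset ι) : Prop :=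
  ∀ y, (∀ i ∈ W, y i = x i) → f y = f x

/-- Pointwise minimum witness size of `f` at `x`. -/
def witAt {ι : Type*} (f : (ι → Bool) → Bool) (x : ι → Bool) : ℕ :=
  sInf {k | ∃ W : Finset ι, W.card = k ∧ IsWitness f x W}

/-- Decision trees querying coordinates in `ι`. -/
inductive DTree (ι : Type*) where
  | leaf : DTree ι
  | node : ι → DTree ι → DTree ι → DTree ι

/-- The set of coordinates queried by the tree `T` on input `x`. -/
def DTree.path {ι : Type*} [DecidableEq ι] : DTree ι → (ι → Bool) → Finset ι
  | .leaf, _ => ∅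
  | .node i t0 t1, x => insert i (if x i then t1.path x else t0.path x)

/-- The tree `T` determines `f`: at each leaf the queried bits witness the value of `f`. -/
def DTree.Determines {ι : Type*} [DecidableEq ι] (T : DTree ι)
    (f : (ι → Bool) → Bool) : Prop :=
  ∀ x, IsWitness f x (T.path x)

/-- A partition of the hypercube into subcubes, encoded by the map sending each point to
the code (fixed coordinates) of its part. -/
structure SubcubePartition (ι : Type*) where
  code : (ι → Bool) → (ι → Option Bool)
  self_mem : ∀ x i b, code x i = some b → x i = b
  compat : ∀ x y, (∀ i b, code x i = some b → y i = b) → code y = code x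

/-- Number of coordinates fixed by the subcube containing `x`. -/
def SubcubePartition.codim {ι : Type*} [Fintype ι] (P : SubcubePartition ι)
    (x : ι → Bool) : ℕ :=
  (Finset.univ.filter fun i => (P.code x i).isSome).card

/-- The partition determines `f`, i.e. `f` is constant on each part. -/
def SubcubePartition.Determines {ι : Type*} (P : SubcubePartition ι)
    (f : (ι → Bool) → Bool) : Prop :=
  ∀ x y, (∀ i b, P.code x i = some b → y i = b) → f y = f x

/-- Deterministic sensitivity. -/
def detSens {ι : Type*} [Fintype ι] [DecidableEq ι] (f : (ι → Bool) → Bool) : ℕ :=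
  Finset.univ.sup fun x => sensAt f x

/-- Deterministic block sensitivity. -/
def detBS {ι : Type*} [Fintype ι] [DecidableEq ι] (f : (ι → Bool) → Bool) : ℕ :=
  Finset.univ.sup fun x => bsAt f x

/-- Deterministic witness complexity. -/
def detWit {ι : Type*} [Fintype ι] [DecidableEq ι] (f : (ι → Bool) → Bool) : ℕ :=
  Finset.univ.sup fun x => witAt f x

/-- Deterministic subcube partition complexity. -/
def detSC {ι : Type*} [Fintype ι] (f : (ι → Bool) → Bool) : ℕ :=
  sInf {k | ∃ P : SubcubePartition ι, P.Determines f ∧ ∀ x, P.codim x ≤ k}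

/-- Deterministic algorithmic (decision tree) complexity. -/
def detAlg {ι : Type*} [Fintype ι] [DecidableEq ι] (f : (ι → Bool) → Bool) : ℕ :=
  sInf {k | ∃ T : DTree ι, T.Determines f ∧ ∀ x, (T.path x).card ≤ k}

/-- Weight of the configuration `x` under the product Bernoulli(p) measure `π_p`. -/
def wt {ι : Type*} [Fintype ι] (p : ℝ) (x : ι → Bool) : ℝ :=
  ∏ i, (if x i then p else 1 - p)

/-- Expectation under `π_p`. -/
def expec {ι : Type*} [Fintype ι] [DecidableEq ι] (p : ℝ) (g : (ι → Bool) → ℝ) : ℝ :=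
  ∑ x, wt p x * g x

/-- Distributional sensitivity. -/
def distSens {ι : Type*} [Fintype ι] [DecidableEq ι] (f : (ι → Bool) → Bool) (p : ℝ) : ℝ :=
  expec p fun x => (sensAt f x : ℝ)

/-- Distributional block sensitivity. -/
def distBS {ι : Type*} [Fintype ι] [DecidableEq ι] (f : (ι → Bool) → Bool) (p : ℝ) : ℝ :=
  expec p fun x => (bsAt f x : ℝ)

/-- Distributional witness complexity. -/
def distWit {ι : Type*} [Fintype ι] [DecidableEq ι] (f : (ι → Bool) → Bool) (p : ℝ) : ℝ :=
  expec p fun x => (witAt f x : ℝ)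

/-- Distributional subcube partition complexity. -/
def distSC {ι : Type*} [Fintype ι] [DecidableEq ι] (f : (ι → Bool) → Bool) (p : ℝ) : ℝ :=
  sInf {c | ∃ P : SubcubePartition ι, P.Determines f ∧
    c = expec p fun x => (P.codim x : ℝ)}

/-- Distributional algorithmic complexity. -/
def distAlg {ι : Type*} [Fintype ι] [DecidableEq ι] (f : (ι → Bool) → Bool) (p : ℝ) : ℝ :=
  sInf {c | ∃ T : DTree ι, T.Determines f ∧
    c = expec p fun x => ((T.path x).card : ℝ)}

/-- `μ x J` is the joint probability that the bits equal `x` and the random set equals `J`;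
the conditions say: the marginal of the bits is `π_p`, the random set is a.s. a witness set
for `f`, and the random set is local (conditionally on `{I = J}` and the bits on `J`, the
bits outside `J` are still i.i.d. Bernoulli(p)). -/
def IsLocalWitnessSystem {ι : Type*} [Fintype ι] [DecidableEq ι]
    (f : (ι → Bool) → Bool) (p : ℝ) (μ : (ι → Bool) → Finset ι → ℝ) : Prop :=
  (∀ x J, 0 ≤ μ x J) ∧
  (∀ x, ∑ J, μ x J = wt p x) ∧
  (∀ x J, μ x J ≠ 0 → IsWitness f x J) ∧
  (∀ (J : Finset ι) x y, (∀ i ∈ J, x i = y i) → μ x J * wt p y = μ y J * wt p x)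

/-- Distributional local witness complexity. -/
def distLocal {ι : Type*} [Fintype ι] [DecidableEq ι]
    (f : (ι → Bool) → Bool) (p : ℝ) : ℝ :=
  sInf {c | ∃ μ : (ι → Bool) → Finset ι → ℝ, IsLocalWitnessSystem f p μ ∧
    c = ∑ x, ∑ J, μ x J * (J.card : ℝ)}

/-- Trees of adaptive queries in the partial-information model: `nodeZ i` asks the
`(1-p)/p` question for bit `i` (revealing the proxy `Z_i`) and `nodeX i` asks the `0/1`
question for bit `i` (revealing the true bit `X_i`). -/
inductive PTree (n : ℕ) where
  | leaf : PTree n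
  | nodeZ : Fin n → PTree n → PTree n → PTree n
  | nodeX : Fin n → PTree n → PTree n → PTree n

/-- Running the tree on proxies `z` and true bits `x`: returns the pair
(set of bits whose proxy `Z` was queried, set of bits whose true value `X` was queried). -/
def PTree.run {n : ℕ} : PTree n → (Fin n → Bool) → (Fin n → Bool) →
    Finset (Fin n) × Finset (Fin n)
  | .leaf, _, _ => (∅, ∅)
  | .nodeZ i t0 t1, z, x =>
      (insert i (if z i then (t1.run z x).1 else (t0.run z x).1),
        if z i then (t1.run z x).2 else (t0.run z x).2)
  | .nodeX i t0 t1, z, x =>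
      ((if x i then (t1.run z x).1 else (t0.run z x).1),
        insert i (if x i then (t1.run z x).2 else (t0.run z x).2))

/-- Validity: the `0/1` question for a bit is only asked after its `(1-p)/p` question. -/
def PTree.Valid {n : ℕ} (T : PTree n) : Prop :=
  ∀ z x : Fin n → Bool, (T.run z x).2 ⊆ (T.run z x).1

/-- The tree determines `f`: at each leaf, the revealed true bits witness `f`. -/
def PTree.DeterminesP {n : ℕ} (T : PTree n) (f : (Fin n → Bool) → Bool) : Prop :=
  ∀ z x : Fin n → Bool, IsWitness f x (T.run z x).2

/-- Joint weight of `(z, x)`: the bits `X_i` are i.i.d. uniform, the proxies `Z_i` are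
uniform with `P[Z_i = X_i] = p`, and the pairs are independent across `i`. -/
def wt2 {n : ℕ} (p : ℝ) (z x : Fin n → Bool) : ℝ :=
  ∏ i, (if z i = x i then p / 2 else (1 - p) / 2)

/-- Expected cost of the tree: `κ` per bit with only the partial question asked, `1` per
bit fully revealed, at the stopping time. -/
def pCost {n : ℕ} (p κ : ℝ) (T : PTree n) : ℝ :=
  ∑ z, ∑ x, wt2 p z x *
    (κ * (((T.run z x).1 \ (T.run z x).2).card : ℝ) + (((T.run z x).2).card : ℝ))

/-- Distributional `(p,κ)`-algorithmic complexity `a_{p,κ}(f, π_{1/2})`. -/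
def aPK {n : ℕ} (f : (Fin n → Bool) → Bool) (p κ : ℝ) : ℝ :=
  sInf {c | ∃ T : PTree n, T.Valid ∧ T.DeterminesP f ∧ c = pCost p κ T}

/-!
A classical decision tree is simulated in the partial-information model by asking both
questions for every bit it queries, at total cost `1` per bit; hence
`a_{p',κ'} ≤ a`. Conversely, `Z'_i = Z_i ⊕ ν_i` with independent noise `ν_i ~ Bernoulli(q)`,
`q = (p - p') / (2p - 1)`, turns a `p`-proxy into a `p'`-proxy. So a tree run on
`p'`-proxies is the average over `ν` of trees run on `p`-proxies, namely the tree with the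
branches of its `Z`-nodes swapped according to `ν`. One of these costs at most the average,
whence `a_{p,κ} ≤ a_{p',κ} ≤ a_{p',κ'}`, and the equality `a_{p,κ} = a` propagates.
-/

open Finset

lemma exists_le_of_sum_mul_eq {α : Type*} [Fintype α] {w g : α → ℝ} {c : ℝ}
    (hw₀ : ∀ a, 0 ≤ w a) (hw₁ : ∑ a, w a = 1) (h : ∑ a, w a * g a = c) : ∃ a, g a ≤ c := by
  have : Nonempty α :=
    univ_nonempty_iff.1 (nonempty_of_sum_ne_zero (by rw [hw₁]; exact one_ne_zero))
  obtain ⟨a₀, ha₀⟩ := Finite.exists_min g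
  refine ⟨a₀, ?_⟩
  calc g a₀ = ∑ a, w a * g a₀ := by rw [← sum_mul, hw₁, one_mul]
    _ ≤ c := h ▸ sum_le_sum fun a _ => mul_le_mul_of_nonneg_left (ha₀ a) (hw₀ a)

section ProductWeights

variable {ι : Type*} [Fintype ι]

lemma wt_nonneg {q : ℝ} (hq₀ : 0 ≤ q) (hq₁ : q ≤ 1) (x : ι → Bool) : 0 ≤ wt q x :=
  prod_nonneg fun i _ => by split <;> linarith

lemma sum_wt [DecidableEq ι] (q : ℝ) : ∑ x : ι → Bool, wt q x = 1 := by
  unfold wt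
  rw [← Fintype.prod_sum fun (_ : ι) (b : Bool) => if b then q else 1 - q]
  simp

end ProductWeights

section ProxyWeights

variable {n : ℕ}

lemma wt2_nonneg {p : ℝ} (hp₀ : 0 ≤ p) (hp₁ : p ≤ 1) (z x : Fin n → Bool) : 0 ≤ wt2 p z x :=
  prod_nonneg fun i _ => by split <;> linarith

lemma sum_wt2_left (p : ℝ) (x : Fin n → Bool) : ∑ z, wt2 p z x = wt (1 / 2) x := by
  unfold wt2
  rw [← Fintype.prod_sum fun (i : Fin n) (b : Bool) => if b = x i then p / 2 else (1 - p) / 2]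
  refine prod_congr rfl fun i _ => ?_
  cases x i <;> simp <;> ring

lemma sum_wt_mul_wt2_xor (p q : ℝ) (z x : Fin n → Bool) :
    ∑ ν, wt q ν * wt2 p (fun i => xor (ν i) (z i)) x = wt2 ((1 - q) * p + q * (1 - p)) z x := by
  simp only [wt, wt2, ← prod_mul_distrib]
  rw [← Fintype.prod_sum fun (i : Fin n) (b : Bool) =>
    (if b then q else 1 - q) * (if xor b (z i) = x i then p / 2 else (1 - p) / 2)]
  refine prod_congr rfl fun i _ => ?_
  cases z i <;> cases x i <;> simp <;> ring

end ProxyWeights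

namespace DTree

variable {ι : Type*}

def full : List ι → DTree ι
  | [] => .leaf
  | i :: l => .node i (full l) (full l)

lemma path_full [DecidableEq ι] (l : List ι) (x : ι → Bool) : (full l).path x = l.toFinset := by
  induction l with
  | nil => rfl
  | cons i l ih => simp [full, path, ih]

lemma determines_full_univ [Fintype ι] [DecidableEq ι] (f : (ι → Bool) → Bool) :
    (full (univ : Finset ι).toList).Determines f := by
  intro x y hy
  congr
  funext i
  exact hy i (by simp [path_full])

def toPTree {n : ℕ} : DTree (Fin n) → PTree n
  | .leaf => .leaf
  | .node i t₀ t₁ => .nodeZ i (.nodeX i t₀.toPTree t₁.toPTree) (.nodeX i t₀.toPTree t₁.toPTree)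

variable {n : ℕ}

lemma run_toPTree (T : DTree (Fin n)) (z x : Fin n → Bool) :
    T.toPTree.run z x = (T.path x, T.path x) := by
  induction T with
  | leaf => rfl
  | node i t₀ t₁ ih₀ ih₁ =>
    simp only [toPTree, PTree.run, ih₀, ih₁, path]
    cases z i <;> cases x i <;> simp

lemma toPTree_valid (T : DTree (Fin n)) : T.toPTree.Valid := by
  intro z x
  rw [run_toPTree]

lemma toPTree_determinesP {T : DTree (Fin n)} {f : (Fin n → Bool) → Bool} (h : T.Determines f) :
    T.toPTree.DeterminesP f := by
  intro z x
  rw [run_toPTree]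
  exact h x

lemma pCost_toPTree (p κ : ℝ) (T : DTree (Fin n)) :
    pCost p κ T.toPTree = expec (1 / 2) fun x => ((T.path x).card : ℝ) := by
  simp only [pCost, expec, run_toPTree, sdiff_self, bot_eq_empty, card_empty, Nat.cast_zero,
    mul_zero, zero_add]
  rw [sum_comm]
  simp only [← sum_mul, sum_wt2_left]

end DTree

namespace PTree

variable {n : ℕ}

def swapZ (ν : Fin n → Bool) : PTree n → PTree n
  | .leaf => .leaf
  | .nodeZ i t₀ t₁ =>
      if ν i then .nodeZ i (t₁.swapZ ν) (t₀.swapZ ν) else .nodeZ i (t₀.swapZ ν) (t₁.swapZ ν)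
  | .nodeX i t₀ t₁ => .nodeX i (t₀.swapZ ν) (t₁.swapZ ν)

lemma run_swapZ (ν : Fin n → Bool) (T : PTree n) (z x : Fin n → Bool) :
    (T.swapZ ν).run z x = T.run (fun i => xor (ν i) (z i)) x := by
  induction T with
  | leaf => rfl
  | nodeZ i t₀ t₁ ih₀ ih₁ =>
    cases hν : ν i <;> cases hz : z i <;> simp [swapZ, run, hν, hz, ih₀, ih₁]
  | nodeX i t₀ t₁ ih₀ ih₁ => simp only [swapZ, run, ih₀, ih₁]

lemma Valid.swapZ {T : PTree n} (h : T.Valid) (ν : Fin n → Bool) : (T.swapZ ν).Valid := by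
  intro z x
  rw [run_swapZ]
  exact h _ x

lemma DeterminesP.swapZ {T : PTree n} {f : (Fin n → Bool) → Bool} (h : T.DeterminesP f)
    (ν : Fin n → Bool) : (T.swapZ ν).DeterminesP f := by
  intro z x
  rw [run_swapZ]
  exact h _ x

def runCost (κ : ℝ) (T : PTree n) (z x : Fin n → Bool) : ℝ :=
  κ * (((T.run z x).1 \ (T.run z x).2).card : ℝ) + ((T.run z x).2.card : ℝ)

lemma pCost_eq_sum_runCost (p κ : ℝ) (T : PTree n) :
    pCost p κ T = ∑ z, ∑ x, wt2 p z x * T.runCost κ z x := rfl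

lemma pCost_swapZ (p κ : ℝ) (ν : Fin n → Bool) (T : PTree n) :
    pCost p κ (T.swapZ ν) = ∑ z, ∑ x, wt2 p (fun i => xor (ν i) (z i)) x * T.runCost κ z x := by
  have hinv : Function.Involutive fun z : Fin n → Bool => fun i => xor (ν i) (z i) :=
    fun z => funext fun i => by simp
  rw [pCost_eq_sum_runCost, ← Equiv.sum_comp hinv.toPerm]
  simp only [runCost, run_swapZ, Function.Involutive.coe_toPerm, hinv _]

lemma sum_wt_mul_pCost_swapZ (p q κ : ℝ) (T : PTree n) :
    ∑ ν, wt q ν * pCost p κ (T.swapZ ν) = pCost ((1 - q) * p + q * (1 - p)) κ T := by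
  simp_rw [pCost_swapZ, pCost_eq_sum_runCost, ← sum_wt_mul_wt2_xor, mul_sum, sum_mul, mul_assoc]
  rw [sum_comm]
  refine sum_congr rfl fun z _ => ?_
  rw [sum_comm]

lemma exists_pCost_swapZ_le {p p' : ℝ} (hp' : 1 / 2 < p') (hpp : p' ≤ p) (κ : ℝ)
    (T : PTree n) : ∃ ν, pCost p κ (T.swapZ ν) ≤ pCost p' κ T := by
  have h2p : 0 < 2 * p - 1 := by linarith
  set q := (p - p') / (2 * p - 1)
  have hq₀ : 0 ≤ q := div_nonneg (by linarith) h2p.le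
  have hq₁ : q ≤ 1 := by rw [div_le_one h2p]; linarith
  have hp'q : (1 - q) * p + q * (1 - p) = p' := by
    linear_combination -(div_mul_cancel₀ (p - p') h2p.ne')
  exact exists_le_of_sum_mul_eq (wt_nonneg hq₀ hq₁) (sum_wt q)
    (hp'q ▸ sum_wt_mul_pCost_swapZ p q κ T)

lemma pCost_nonneg {p κ : ℝ} (hp₀ : 0 ≤ p) (hp₁ : p ≤ 1) (hκ : 0 ≤ κ) (T : PTree n) :
    0 ≤ pCost p κ T :=
  sum_nonneg fun z _ => sum_nonneg fun x _ =>
    mul_nonneg (wt2_nonneg hp₀ hp₁ z x) (by positivity)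

lemma pCost_mono_right {p κ κ' : ℝ} (hp₀ : 0 ≤ p) (hp₁ : p ≤ 1) (hκ : κ ≤ κ') (T : PTree n) :
    pCost p κ T ≤ pCost p κ' T :=
  sum_le_sum fun z _ => sum_le_sum fun x _ =>
    mul_le_mul_of_nonneg_left (by gcongr) (wt2_nonneg hp₀ hp₁ z x)

end PTree

section aPK

variable {n : ℕ} {f : (Fin n → Bool) → Bool} {p p' κ κ' : ℝ}

lemma bddBelow_pCost (hp₀ : 0 ≤ p) (hp₁ : p ≤ 1) (hκ : 0 ≤ κ) :
    BddBelow {c | ∃ T : PTree n, T.Valid ∧ T.DeterminesP f ∧ c = pCost p κ T} := by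
  refine ⟨0, ?_⟩
  rintro c ⟨T, -, -, rfl⟩
  exact T.pCost_nonneg hp₀ hp₁ hκ

lemma aPK_le_pCost (hp₀ : 0 ≤ p) (hp₁ : p ≤ 1) (hκ : 0 ≤ κ) {T : PTree n} (hT : T.Valid)
    (hTf : T.DeterminesP f) : aPK f p κ ≤ pCost p κ T :=
  csInf_le (bddBelow_pCost hp₀ hp₁ hκ) ⟨T, hT, hTf, rfl⟩

lemma aPK_le_distAlg (hp₀ : 0 ≤ p) (hp₁ : p ≤ 1) (hκ : 0 ≤ κ) :
    aPK f p κ ≤ distAlg f (1 / 2) := by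
  refine le_csInf ⟨_, _, DTree.determines_full_univ f, rfl⟩ ?_
  rintro c ⟨T, hTf, rfl⟩
  rw [← T.pCost_toPTree p κ]
  exact aPK_le_pCost hp₀ hp₁ hκ T.toPTree_valid (DTree.toPTree_determinesP hTf)

lemma aPK_le_aPK (hp' : 1 / 2 < p') (hpp : p' ≤ p) (hp₁ : p ≤ 1) (hκ₀ : 0 ≤ κ)
    (hκκ : κ ≤ κ') : aPK f p κ ≤ aPK f p' κ' := by
  have hfull := DTree.determines_full_univ f
  refine le_csInf ⟨_, _, DTree.toPTree_valid _, DTree.toPTree_determinesP hfull, rfl⟩ ?_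
  rintro c ⟨T, hT, hTf, rfl⟩
  obtain ⟨ν, hν⟩ := T.exists_pCost_swapZ_le hp' hpp κ
  calc aPK f p κ ≤ pCost p κ (T.swapZ ν) :=
        aPK_le_pCost (by linarith) hp₁ hκ₀ (hT.swapZ ν) (hTf.swapZ ν)
    _ ≤ pCost p' κ T := hν
    _ ≤ pCost p' κ' T := T.pCost_mono_right (by linarith) (hpp.trans hp₁) hκκ

end aPK

theorem aPK_monotone_general (n : ℕ) (f : (Fin n → Bool) → Bool) (p p' κ κ' : ℝ)
    (hp' : 1 / 2 < p') (hpp : p' ≤ p) (hp1 : p < 1)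
    (hκ0 : 0 ≤ κ) (hκκ : κ ≤ κ')
    (h : aPK f p κ = distAlg f (1 / 2)) :
    aPK f p' κ' = distAlg f (1 / 2) :=
  le_antisymm (aPK_le_distAlg (by linarith) (by linarith) (hκ0.trans hκκ))
    (h ▸ aPK_le_aPK hp' hpp hp1.le hκ0 hκκ)

/-- monotonicity of optimality of standard querying in the
partial-information model: if `p ≥ p'`, `κ' ≥ κ` and `a_{p,κ}(f,π_{1/2}) = a(f,π_{1/2})`,
then also `a_{p',κ'}(f,π_{1/2}) = a(f,π_{1/2})`. -/
theorem aPK_monotone (n : ℕ) (f : (Fin n → Bool) → Bool) (p p' κ κ' : ℝ)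
    (hp' : 1 / 2 < p') (hpp : p' ≤ p) (hp1 : p < 1)
    (hκ0 : 0 ≤ κ) (hκκ : κ ≤ κ') (hκ'1 : κ' ≤ 1)
    (h : aPK f p κ = distAlg f (1 / 2)) :
    aPK f p' κ' = distAlg f (1 / 2) :=
  aPK_monotone_general n f p p' κ κ' hp' hpp hp1 hκ0 hκκ h
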